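/- arXiv:2602.01529 — 4 statements merged into one kernel-verified Lean document; each statement's English description precedes it below -/
import Mathlib

section
/- Let V be a real Hilbert space, A : V → V* Lipschitz with constant M_A and strongly monotone with constant m_A, b : V × Q → ℝ bilinear bounded with constant M_b, Φ : V × V → ℝ satisfying Φ(u₁,v₂) − Φ(u₁,v₁) + Φ(u₂,v₁) − Φ(u₂,v₂) ≤ α_Φ‖u₁−u₂‖‖v₁−v₂‖, and Ψ locally Lipschitz with Ψ⁰(v₁;v₂−v₁) + Ψ⁰(v₂;v₁−v₂) ≤ α_Ψ‖v₁−v₂‖². Suppose α_Φ + α_Ψ < m_A, and (u₁,p₁), (u₂,p₂) ∈ K_V × K_Q satisfy the mixed variational-hemivariational inequality system with data p₁, p₂ respectively, i.e. ⟨Au_i, v−u_i⟩ + b(v−u_i, p_i) + Φ(u_i,v) − Φ(u_i,u_i) + Ψ⁰(u_i; v−u_i) ≥ ⟨f, v−u_i⟩ for all v ∈ K_V. Then (m_A − α_Φ − α_Ψ)‖u₁−u₂‖² ≤ −b(u₁−u₂, p₁−p₂), and consequently ‖u₁−u₂‖ ≤ (M_b/(m_A − α_Φ − α_Ψ))‖p₁−p₂‖_Q.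 -/
open Filter

/-- The Clarke generalized directional derivative of `Ψ` at `u` in the direction `v`. -/
noncomputable def clarkeDeriv {V : Type*} [NormedAddCommGroup V] [NormedSpace ℝ V]
    (Ψ : V → ℝ) (u v : V) : ℝ :=
  limsup (fun p : V × ℝ => (Ψ (p.1 + p.2 • v) - Ψ p.1) / p.2)
    ((nhds u) ×ˢ (nhdsWithin (0 : ℝ) (Set.Ioi 0)))

/-- If `(u₁,p₁)` and `(u₂,p₂)` solve the first inequality of the mixed
variational-hemivariational inequality system with data `p₁`, `p₂` respectively, then
`(m_A − α_Φ − α_Ψ)‖u₁−u₂‖² ≤ −b(u₁−u₂, p₁−p₂)` and consequently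
`‖u₁−u₂‖ ≤ (M_b/(m_A − α_Φ − α_Ψ))‖p₁−p₂‖`. -/
theorem mixed_vhvi_velocity_bound
    {V Q : Type*} [NormedAddCommGroup V] [InnerProductSpace ℝ V] [CompleteSpace V]
    [NormedAddCommGroup Q] [InnerProductSpace ℝ Q] [CompleteSpace Q]
    (K_V : Set V) (hKV : K_V.Nonempty) (hKVc : IsClosed K_V) (hKVconv : Convex ℝ K_V)
    (K_Q : Set Q) (hKQ : K_Q.Nonempty) (hKQc : IsClosed K_Q) (hKQconv : Convex ℝ K_Q)
    (A : V → V →L[ℝ] ℝ) (m_A M_A : ℝ) (hmA : 0 < m_A) (hMA : 0 < M_A)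
    (hA_lip : ∀ v₁ v₂ : V, ‖A v₁ - A v₂‖ ≤ M_A * ‖v₁ - v₂‖)
    (hA_mono : ∀ v₁ v₂ : V, m_A * ‖v₁ - v₂‖ ^ 2 ≤ (A v₁ - A v₂) (v₁ - v₂))
    (b : V →ₗ[ℝ] Q →ₗ[ℝ] ℝ) (M_b : ℝ) (hMb : 0 < M_b)
    (hb_bd : ∀ (v : V) (q : Q), |b v q| ≤ M_b * ‖v‖ * ‖q‖)
    (Φ : V → V → ℝ) (α_Φ : ℝ) (hαΦ : 0 ≤ α_Φ)
    (hΦ : ∀ u₁ u₂ v₁ v₂ : V,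
      Φ u₁ v₂ - Φ u₁ v₁ + Φ u₂ v₁ - Φ u₂ v₂ ≤ α_Φ * ‖u₁ - u₂‖ * ‖v₁ - v₂‖)
    (Ψ : V → ℝ) (hΨ_lip : LocallyLipschitz Ψ) (α_Ψ : ℝ) (hαΨ : 0 ≤ α_Ψ)
    (hΨ : ∀ v₁ v₂ : V,
      clarkeDeriv Ψ v₁ (v₂ - v₁) + clarkeDeriv Ψ v₂ (v₁ - v₂) ≤ α_Ψ * ‖v₁ - v₂‖ ^ 2)
    (f : V →L[ℝ] ℝ)
    (hsmall : α_Φ + α_Ψ < m_A)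
    (u₁ u₂ : V) (hu₁ : u₁ ∈ K_V) (hu₂ : u₂ ∈ K_V)
    (p₁ p₂ : Q) (hp₁ : p₁ ∈ K_Q) (hp₂ : p₂ ∈ K_Q)
    (hsol₁ : ∀ v ∈ K_V,
      A u₁ (v - u₁) + b (v - u₁) p₁ + Φ u₁ v - Φ u₁ u₁ + clarkeDeriv Ψ u₁ (v - u₁)
        ≥ f (v - u₁))
    (hsol₂ : ∀ v ∈ K_V,
      A u₂ (v - u₂) + b (v - u₂) p₂ + Φ u₂ v - Φ u₂ u₂ + clarkeDeriv Ψ u₂ (v - u₂)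
        ≥ f (v - u₂)) :
    (m_A - α_Φ - α_Ψ) * ‖u₁ - u₂‖ ^ 2 ≤ -(b (u₁ - u₂) (p₁ - p₂)) ∧
      ‖u₁ - u₂‖ ≤ M_b / (m_A - α_Φ - α_Ψ) * ‖p₁ - p₂‖ := by
  have h1 := hsol₁ u₂ hu₂
  have h2 := hsol₂ u₁ hu₁
  have hΦ' := hΦ u₁ u₂ u₁ u₂
  have hΨ' := hΨ u₁ u₂
  have hmono := hA_mono u₁ u₂
  have hb' : b (u₂ - u₁) p₁ + b (u₁ - u₂) p₂ = -(b (u₁ - u₂) (p₁ - p₂)) := by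
    simp [map_sub]; ring
  have hA' : (A u₁ - A u₂) (u₁ - u₂) = -(A u₁ (u₂ - u₁)) - A u₂ (u₁ - u₂) := by
    simp [map_sub]; ring
  have hf : f (u₂ - u₁) + f (u₁ - u₂) = 0 := by simp [map_sub]
  have hn : ‖u₂ - u₁‖ = ‖u₁ - u₂‖ := by rw [← norm_neg, neg_sub]
  have key : (m_A - α_Φ - α_Ψ) * ‖u₁ - u₂‖ ^ 2 ≤ -(b (u₁ - u₂) (p₁ - p₂)) := by
    rw [← hb']
    nlinarith [hmono, hΦ', hΨ', h1, h2, hf, hA']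
  refine ⟨key, ?_⟩
  have hpos : 0 < m_A - α_Φ - α_Ψ := by linarith
  rcases eq_or_lt_of_le (norm_nonneg (u₁ - u₂)) with h0 | h0
  · rw [← h0]
    positivity
  · have hbd : -(b (u₁ - u₂) (p₁ - p₂)) ≤ M_b * ‖u₁ - u₂‖ * ‖p₁ - p₂‖ := by
      have := hb_bd (u₁ - u₂) (p₁ - p₂)
      have := neg_abs_le ((b (u₁ - u₂)) (p₁ - p₂))
      linarith
    rw [div_mul_eq_mul_div, le_div_iff₀ hpos]
    nlinarith [key]
end

section
/- Let Q be a real Hilbert space, K_Q ⊆ Q nonempty closed convex with projection P, B : V → Q bounded linear with ‖B‖ ≤ M_b, and suppose u₁, u₂ ∈ V, p₁, p₂ ∈ Q satisfy b(u₁−u₂, p₁−p₂) ≤ −m‖u₁−u₂‖_V² for some m > 0, where b(v,q) = (Bv,q)_Q. Then for any ρ > 0, ‖P(p₁+ρBu₁) − P(p₂+ρBu₂)‖_Q² ≤ ‖p₁−p₂‖_Q² − (2ρm − ρ²M_b²)‖u₁−u₂‖_V². -/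
/-!
The variational inequality characterizing `P` makes it firmly non-expansive, hence
non-expansive, so the left-hand side is at most `‖(p₁ - p₂) + ρ B(u₁ - u₂)‖²`. Expanding this
square, the cross term is controlled by the hypothesis on `b` and the last term by `‖B‖ ≤ M_b`.
-/

open RealInnerProductSpace

section Projection

variable {Q : Type*} [NormedAddCommGroup Q] [InnerProductSpace ℝ Q] {K : Set Q} {P : Q → Q}

theorem norm_sq_sub_le_inner_of_variational_ineq
    (hP : ∀ z : Q, P z ∈ K ∧ ∀ q ∈ K, ⟪z - P z, q - P z⟫ ≤ 0) (z₁ z₂ : Q) :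
    ‖P z₁ - P z₂‖ ^ 2 ≤ ⟪z₁ - z₂, P z₁ - P z₂⟫ := by
  have h₁ := (hP z₁).2 (P z₂) (hP z₂).1
  have h₂ := (hP z₂).2 (P z₁) (hP z₁).1
  have hsplit : ⟪z₁ - z₂, P z₁ - P z₂⟫ - ‖P z₁ - P z₂‖ ^ 2
      = -⟪z₁ - P z₁, P z₂ - P z₁⟫ - ⟪z₂ - P z₂, P z₁ - P z₂⟫ := by
    rw [← real_inner_self_eq_norm_sq]
    simp only [inner_sub_left, inner_sub_right]
    ring
  linarith

theorem norm_sub_le_of_variational_ineq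
    (hP : ∀ z : Q, P z ∈ K ∧ ∀ q ∈ K, ⟪z - P z, q - P z⟫ ≤ 0) (z₁ z₂ : Q) :
    ‖P z₁ - P z₂‖ ≤ ‖z₁ - z₂‖ := by
  have hfirm := norm_sq_sub_le_inner_of_variational_ineq hP z₁ z₂
  have hcs := real_inner_le_norm (z₁ - z₂) (P z₁ - P z₂)
  rcases (norm_nonneg (P z₁ - P z₂)).eq_or_lt with h | h
  · rw [← h]
    exact norm_nonneg _
  · nlinarith

end Projection

theorem norm_add_smul_sq_le_of_inner_le
    {V Q : Type*} [NormedAddCommGroup V] [InnerProductSpace ℝ V]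
    [NormedAddCommGroup Q] [InnerProductSpace ℝ Q]
    (B : V →L[ℝ] Q) {M m ρ : ℝ} (hB : ‖B‖ ≤ M) (v : V) (p : Q)
    (hb : ⟪B v, p⟫ ≤ -m * ‖v‖ ^ 2) (hρ : 0 ≤ ρ) :
    ‖p + ρ • B v‖ ^ 2 ≤ ‖p‖ ^ 2 - (2 * ρ * m - ρ ^ 2 * M ^ 2) * ‖v‖ ^ 2 := by
  have hBv : ‖B v‖ ≤ M * ‖v‖ := B.le_of_opNorm_le hB v
  have hBv_sq : ‖B v‖ ^ 2 ≤ M ^ 2 * ‖v‖ ^ 2 := by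
    rw [← mul_pow]
    exact pow_le_pow_left₀ (norm_nonneg _) hBv 2
  have hcross : ρ * ⟪p, B v⟫ ≤ ρ * (-m * ‖v‖ ^ 2) := by
    rw [real_inner_comm]
    exact mul_le_mul_of_nonneg_left hb hρ
  have hlast : ρ ^ 2 * ‖B v‖ ^ 2 ≤ ρ ^ 2 * (M ^ 2 * ‖v‖ ^ 2) :=
    mul_le_mul_of_nonneg_left hBv_sq (sq_nonneg ρ)
  rw [norm_add_sq_real, inner_smul_right, norm_smul, mul_pow, Real.norm_eq_abs, sq_abs]
  linarith

theorem projection_iteration_contraction_general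
    {V Q : Type*} [NormedAddCommGroup V] [InnerProductSpace ℝ V]
    [NormedAddCommGroup Q] [InnerProductSpace ℝ Q]
    (K : Set Q)
    (P : Q → Q)
    (hP : ∀ z : Q, P z ∈ K ∧ ∀ q ∈ K, inner ℝ (z - P z) (q - P z) ≤ (0 : ℝ))
    (B : V →L[ℝ] Q) (M_b : ℝ) (hB : ‖B‖ ≤ M_b)
    (m : ℝ)
    (u₁ u₂ : V) (p₁ p₂ : Q)
    (hb : (inner ℝ (B (u₁ - u₂)) (p₁ - p₂) : ℝ) ≤ -m * ‖u₁ - u₂‖ ^ 2)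
    (ρ : ℝ) (hρ : 0 < ρ) :
    ‖P (p₁ + ρ • B u₁) - P (p₂ + ρ • B u₂)‖ ^ 2
      ≤ ‖p₁ - p₂‖ ^ 2 - (2 * ρ * m - ρ ^ 2 * M_b ^ 2) * ‖u₁ - u₂‖ ^ 2 := by
  have hdiff : (p₁ + ρ • B u₁) - (p₂ + ρ • B u₂) = (p₁ - p₂) + ρ • B (u₁ - u₂) := by
    rw [map_sub]
    module
  calc ‖P (p₁ + ρ • B u₁) - P (p₂ + ρ • B u₂)‖ ^ 2
      ≤ ‖(p₁ + ρ • B u₁) - (p₂ + ρ • B u₂)‖ ^ 2 :=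
        pow_le_pow_left₀ (norm_nonneg _) (norm_sub_le_of_variational_ineq hP _ _) 2
    _ = ‖(p₁ - p₂) + ρ • B (u₁ - u₂)‖ ^ 2 := by rw [hdiff]
    _ ≤ ‖p₁ - p₂‖ ^ 2 - (2 * ρ * m - ρ ^ 2 * M_b ^ 2) * ‖u₁ - u₂‖ ^ 2 :=
        norm_add_smul_sq_le_of_inner_le B hB _ _ hb hρ.le

/-- If `b(u₁−u₂, p₁−p₂) ≤ −m‖u₁−u₂‖²` with `b(v,q) = ⟪Bv,q⟫`, `‖B‖ ≤ M_b` and `P` is the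
(non-expansive) metric projection onto the nonempty closed convex set `K`, then for any
`ρ > 0`, `‖P(p₁+ρBu₁) − P(p₂+ρBu₂)‖² ≤ ‖p₁−p₂‖² − (2ρm − ρ²M_b²)‖u₁−u₂‖²`. -/
theorem projection_iteration_contraction
    {V Q : Type*} [NormedAddCommGroup V] [InnerProductSpace ℝ V] [CompleteSpace V]
    [NormedAddCommGroup Q] [InnerProductSpace ℝ Q] [CompleteSpace Q]
    (K : Set Q) (hK : K.Nonempty) (hKc : IsClosed K) (hKconv : Convex ℝ K)
    (P : Q → Q)
    (hP : ∀ z : Q, P z ∈ K ∧ ∀ q ∈ K, inner ℝ (z - P z) (q - P z) ≤ (0 : ℝ))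
    (B : V →L[ℝ] Q) (M_b : ℝ) (hB : ‖B‖ ≤ M_b)
    (m : ℝ) (hm : 0 < m)
    (u₁ u₂ : V) (p₁ p₂ : Q)
    (hb : (inner ℝ (B (u₁ - u₂)) (p₁ - p₂) : ℝ) ≤ -m * ‖u₁ - u₂‖ ^ 2)
    (ρ : ℝ) (hρ : 0 < ρ) :
    ‖P (p₁ + ρ • B u₁) - P (p₂ + ρ • B u₂)‖ ^ 2
      ≤ ‖p₁ - p₂‖ ^ 2 - (2 * ρ * m - ρ ^ 2 * M_b ^ 2) * ‖u₁ - u₂‖ ^ 2 :=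
  projection_iteration_contraction_general K P hP B M_b hB m u₁ u₂ p₁ p₂ hb ρ hρ
end

section
/- Under the hypotheses H(K_V), H(K_Q), H(A), H(b), H(Φ)₂, H(Ψ), H(f) and the smallness condition α_Φ + α_Ψ < m_A, the mixed variational-hemivariational inequality Problem: find (u,p) ∈ K_V × K_Q with ⟨Au, v−u⟩ + b(v−u, p) + Φ(u,v) − Φ(u,u) + Ψ⁰(u; v−u) ≥ ⟨f, v−u⟩ for all v ∈ K_V and b(u, q−p) ≤ 0 for all q ∈ K_Q, has at most one solution. -/
/-! Adding the inequalities of two solutions, each tested with the other, the constraint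
terms in `b` have a sign and strong monotonicity of `A` beats `α_Φ + α_Ψ`, so `u₁ = u₂`.
Since `K_V` is closed, it is invariant under translation by `V₀`; testing with `v = u ± w`,
`w ∈ V₀`, where `Φ` and `Ψ⁰` do not see `w`, determines `b w p` as `f w - A u w`, and the
inf-sup condition then pins down `p`. -/

open Filter

open Topology

theorem Convex.add_mem_of_mem_submodule {E : Type*} [AddCommGroup E] [Module ℝ E]
    [TopologicalSpace E] [ContinuousAdd E] [ContinuousSMul ℝ E] {K : Set E}
    (hKc : IsClosed K) (hK : Convex ℝ K) {V₀ : Submodule ℝ E} (hV₀ : (V₀ : Set E) ⊆ K)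
    {u w : E} (hu : u ∈ K) (hw : w ∈ V₀) : u + w ∈ K := by
  have hsegment : ∀ t ∈ Set.Ioc (0 : ℝ) 1, (1 - t) • u + w ∈ K := by
    rintro t ⟨ht₀, ht₁⟩
    have := hK hu (hV₀ (V₀.smul_mem t⁻¹ hw)) (sub_nonneg.2 ht₁) ht₀.le (by ring)
    simpa [smul_smul, ht₀.ne'] using this
  have hlim : Tendsto (fun t : ℝ => (1 - t) • u + w) (𝓝[>] 0) (𝓝 (u + w)) := by
    have hcont : Continuous fun t : ℝ => (1 - t) • u + w := by fun_prop
    simpa using (hcont.tendsto 0).mono_left nhdsWithin_le_nhds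
  exact hKc.mem_of_tendsto hlim (mem_of_superset (Ioc_mem_nhdsGT zero_lt_one) hsegment)

theorem eq_of_infSup_of_forall_mem_apply_eq {V Q : Type*} [NormedAddCommGroup V]
    [NormedAddCommGroup Q] [Module ℝ V] [Module ℝ Q] {V₀ : Submodule ℝ V}
    {b : V →ₗ[ℝ] Q →ₗ[ℝ] ℝ} {α_b : ℝ} (hαb : 0 < α_b)
    (hinfsup : ∀ q : Q, α_b * ‖q‖ ≤ ⨆ w : {w : V // w ∈ V₀ ∧ w ≠ 0}, b w q / ‖(w : V)‖)
    {p₁ p₂ : Q} (h : ∀ w ∈ V₀, b w p₁ = b w p₂) : p₁ = p₂ := by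
  have hsup : (⨆ w : {w : V // w ∈ V₀ ∧ w ≠ 0}, b w (p₁ - p₂) / ‖(w : V)‖) ≤ 0 :=
    Real.iSup_le (fun w => by simp [h w w.2.1]) le_rfl
  have hnorm : ‖p₁ - p₂‖ ≤ 0 :=
    nonpos_of_mul_nonpos_right ((hinfsup _).trans hsup) hαb
  exact sub_eq_zero.1 (norm_le_zero_iff.1 hnorm)

section MixedVHVI

variable {V Q : Type*} [NormedAddCommGroup V] [NormedSpace ℝ V] [AddCommGroup Q] [Module ℝ Q]
  {K_V : Set V} {K_Q : Set Q} {A : V → V →L[ℝ] ℝ} {b : V →ₗ[ℝ] Q →ₗ[ℝ] ℝ}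
  {Φ : V → V → ℝ} {Ψ : V → ℝ} {f : V →L[ℝ] ℝ}

theorem mixed_vhvi_fst_eq {m_A α_Φ α_Ψ : ℝ}
    (hA_mono : ∀ v₁ v₂ : V, m_A * ‖v₁ - v₂‖ ^ 2 ≤ (A v₁ - A v₂) (v₁ - v₂))
    (hΦ : ∀ u₁ u₂ v₁ v₂ : V,
      Φ u₁ v₂ - Φ u₁ v₁ + Φ u₂ v₁ - Φ u₂ v₂ ≤ α_Φ * ‖u₁ - u₂‖ * ‖v₁ - v₂‖)
    (hΨ : ∀ v₁ v₂ : V,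
      clarkeDeriv Ψ v₁ (v₂ - v₁) + clarkeDeriv Ψ v₂ (v₁ - v₂) ≤ α_Ψ * ‖v₁ - v₂‖ ^ 2)
    (hsmall : α_Φ + α_Ψ < m_A)
    {u₁ u₂ : V} (hu₁ : u₁ ∈ K_V) (hu₂ : u₂ ∈ K_V) {p₁ p₂ : Q} (hp₁ : p₁ ∈ K_Q) (hp₂ : p₂ ∈ K_Q)
    (hsol₁ : ∀ v ∈ K_V,
      A u₁ (v - u₁) + b (v - u₁) p₁ + Φ u₁ v - Φ u₁ u₁ + clarkeDeriv Ψ u₁ (v - u₁)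
        ≥ f (v - u₁))
    (hconstr₁ : ∀ q ∈ K_Q, b u₁ (q - p₁) ≤ 0)
    (hsol₂ : ∀ v ∈ K_V,
      A u₂ (v - u₂) + b (v - u₂) p₂ + Φ u₂ v - Φ u₂ u₂ + clarkeDeriv Ψ u₂ (v - u₂)
        ≥ f (v - u₂))
    (hconstr₂ : ∀ q ∈ K_Q, b u₂ (q - p₂) ≤ 0) :
    u₁ = u₂ := by
  have hA : (A u₁ - A u₂) (u₁ - u₂) = -(A u₁ (u₂ - u₁) + A u₂ (u₁ - u₂)) := by
    simp only [sub_apply, map_sub]; ring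
  have hb : b (u₂ - u₁) p₁ + b (u₁ - u₂) p₂ = b u₁ (p₂ - p₁) + b u₂ (p₁ - p₂) := by
    simp only [map_sub, LinearMap.sub_apply]; ring
  have hf : f (u₂ - u₁) + f (u₁ - u₂) = 0 := by
    rw [← map_add, sub_add_sub_cancel, sub_self, map_zero]
  have hgap : m_A * ‖u₁ - u₂‖ ^ 2 ≤ (α_Φ + α_Ψ) * ‖u₁ - u₂‖ ^ 2 := by
    linarith [hA_mono u₁ u₂, hsol₁ u₂ hu₂, hsol₂ u₁ hu₁, hconstr₁ p₂ hp₂, hconstr₂ p₁ hp₁,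
      hΦ u₁ u₂ u₁ u₂, hΨ u₁ u₂]
  by_contra hne
  have hpos : 0 < ‖u₁ - u₂‖ ^ 2 := by positivity [sub_ne_zero.2 hne]
  exact hsmall.not_ge ((mul_le_mul_iff_of_pos_right hpos).1 hgap)

theorem mixed_vhvi_apply_eq_of_mem_submodule (hKVc : IsClosed K_V) (hKVconv : Convex ℝ K_V)
    {V₀ : Submodule ℝ V} (hV₀ : (V₀ : Set V) ⊆ K_V)
    (hΦinv : ∀ u : V, ∀ v ∈ K_V, ∀ w ∈ V₀, Φ u (v + w) = Φ u v)
    (hΨ₀ : ∀ v ∈ K_V, ∀ w ∈ V₀, clarkeDeriv Ψ v w = 0)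
    {u : V} (hu : u ∈ K_V) {p : Q}
    (hsol : ∀ v ∈ K_V,
      A u (v - u) + b (v - u) p + Φ u v - Φ u u + clarkeDeriv Ψ u (v - u) ≥ f (v - u))
    {w : V} (hw : w ∈ V₀) :
    b w p = f w - A u w := by
  have htest : ∀ w ∈ V₀, f w ≤ A u w + b w p := fun w hw => by
    have h := hsol (u + w) (hKVconv.add_mem_of_mem_submodule hKVc hV₀ hu hw)
    rw [add_sub_cancel_left, hΦinv u u hu w hw, hΨ₀ u hu w hw] at h
    linarith
  have hplus := htest w hw
  have hminus := htest (-w) (neg_mem hw)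
  simp only [map_neg, LinearMap.neg_apply] at hminus
  linarith

end MixedVHVI

theorem mixed_vhvi_uniqueness_general
    {V Q : Type*} [NormedAddCommGroup V] [InnerProductSpace ℝ V]
    [NormedAddCommGroup Q] [InnerProductSpace ℝ Q]
    -- H(K_V)
    (K_V : Set V) (hKVc : IsClosed K_V) (hKVconv : Convex ℝ K_V)
    (V₀ : Submodule ℝ V) (hV₀ : (V₀ : Set V) ⊆ K_V)
    -- H(K_Q)
    (K_Q : Set Q)
    -- H(A)
    (A : V → V →L[ℝ] ℝ) (m_A : ℝ)
    (hA_mono : ∀ v₁ v₂ : V, m_A * ‖v₁ - v₂‖ ^ 2 ≤ (A v₁ - A v₂) (v₁ - v₂))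
    -- H(b)
    (b : V →ₗ[ℝ] Q →ₗ[ℝ] ℝ)
    (α_b : ℝ) (hαb : 0 < α_b)
    (hinfsup : ∀ q : Q, α_b * ‖q‖ ≤ ⨆ w : {w : V // w ∈ V₀ ∧ w ≠ 0}, b w q / ‖(w : V)‖)
    -- H(Φ)₂
    (Φ : V → V → ℝ) (α_Φ : ℝ)
    (hΦ : ∀ u₁ u₂ v₁ v₂ : V,
      Φ u₁ v₂ - Φ u₁ v₁ + Φ u₂ v₁ - Φ u₂ v₂ ≤ α_Φ * ‖u₁ - u₂‖ * ‖v₁ - v₂‖)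
    (hΦinv : ∀ u : V, ∀ v ∈ K_V, ∀ w ∈ V₀, Φ u (v + w) = Φ u v)
    -- H(Ψ)
    (Ψ : V → ℝ) (α_Ψ : ℝ)
    (hΨ : ∀ v₁ v₂ : V,
      clarkeDeriv Ψ v₁ (v₂ - v₁) + clarkeDeriv Ψ v₂ (v₁ - v₂) ≤ α_Ψ * ‖v₁ - v₂‖ ^ 2)
    (hΨ₀ : ∀ v ∈ K_V, ∀ w ∈ V₀, clarkeDeriv Ψ v w = 0)
    -- H(f) and smallness
    (f : V →L[ℝ] ℝ) (hsmall : α_Φ + α_Ψ < m_A)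
    -- two solutions
    (u₁ u₂ : V) (hu₁ : u₁ ∈ K_V) (hu₂ : u₂ ∈ K_V)
    (p₁ p₂ : Q) (hp₁ : p₁ ∈ K_Q) (hp₂ : p₂ ∈ K_Q)
    (hsol₁ : ∀ v ∈ K_V,
      A u₁ (v - u₁) + b (v - u₁) p₁ + Φ u₁ v - Φ u₁ u₁ + clarkeDeriv Ψ u₁ (v - u₁)
        ≥ f (v - u₁))
    (hconstr₁ : ∀ q ∈ K_Q, b u₁ (q - p₁) ≤ 0)
    (hsol₂ : ∀ v ∈ K_V,
      A u₂ (v - u₂) + b (v - u₂) p₂ + Φ u₂ v - Φ u₂ u₂ + clarkeDeriv Ψ u₂ (v - u₂)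
        ≥ f (v - u₂))
    (hconstr₂ : ∀ q ∈ K_Q, b u₂ (q - p₂) ≤ 0) :
    u₁ = u₂ ∧ p₁ = p₂ := by
  obtain rfl : u₁ = u₂ := mixed_vhvi_fst_eq hA_mono hΦ hΨ hsmall hu₁ hu₂ hp₁ hp₂
    hsol₁ hconstr₁ hsol₂ hconstr₂
  refine ⟨rfl, eq_of_infSup_of_forall_mem_apply_eq hαb hinfsup fun w hw => ?_⟩
  rw [mixed_vhvi_apply_eq_of_mem_submodule hKVc hKVconv hV₀ hΦinv hΨ₀ hu₁ hsol₁ hw,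
    mixed_vhvi_apply_eq_of_mem_submodule hKVc hKVconv hV₀ hΦinv hΨ₀ hu₁ hsol₂ hw]

/-- Under `H(K_V)`, `H(K_Q)`, `H(A)`, `H(b)`, `H(Φ)₂`, `H(Ψ)`, `H(f)` and the smallness
condition `α_Φ + α_Ψ < m_A`, the mixed variational-hemivariational inequality Problem has
at most one solution. -/
theorem mixed_vhvi_uniqueness
    {V Q : Type*} [NormedAddCommGroup V] [InnerProductSpace ℝ V] [CompleteSpace V]
    [NormedAddCommGroup Q] [InnerProductSpace ℝ Q] [CompleteSpace Q]
    -- H(K_V)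
    (K_V : Set V) (hKV : K_V.Nonempty) (hKVc : IsClosed K_V) (hKVconv : Convex ℝ K_V)
    (V₀ : Submodule ℝ V) (hV₀ : (V₀ : Set V) ⊆ K_V)
    -- H(K_Q)
    (K_Q : Set Q) (hKQ : K_Q.Nonempty) (hKQc : IsClosed K_Q) (hKQconv : Convex ℝ K_Q)
    -- H(A)
    (A : V → V →L[ℝ] ℝ) (m_A M_A : ℝ) (hmA : 0 < m_A) (hMA : 0 < M_A)
    (hA_lip : ∀ v₁ v₂ : V, ‖A v₁ - A v₂‖ ≤ M_A * ‖v₁ - v₂‖)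
    (hA_mono : ∀ v₁ v₂ : V, m_A * ‖v₁ - v₂‖ ^ 2 ≤ (A v₁ - A v₂) (v₁ - v₂))
    -- H(b)
    (b : V →ₗ[ℝ] Q →ₗ[ℝ] ℝ) (M_b : ℝ) (hMb : 0 < M_b)
    (hb_bd : ∀ (v : V) (q : Q), |b v q| ≤ M_b * ‖v‖ * ‖q‖)
    (α_b : ℝ) (hαb : 0 < α_b)
    (hinfsup : ∀ q : Q, α_b * ‖q‖ ≤ ⨆ w : {w : V // w ∈ V₀ ∧ w ≠ 0}, b w q / ‖(w : V)‖)
    -- H(Φ)₂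
    (Φ : V → V → ℝ) (α_Φ : ℝ) (hαΦ : 0 ≤ α_Φ)
    (hΦconv : ∀ u : V, ConvexOn ℝ Set.univ (Φ u))
    (hΦcont : ∀ u : V, Continuous (Φ u))
    (hΦ : ∀ u₁ u₂ v₁ v₂ : V,
      Φ u₁ v₂ - Φ u₁ v₁ + Φ u₂ v₁ - Φ u₂ v₂ ≤ α_Φ * ‖u₁ - u₂‖ * ‖v₁ - v₂‖)
    (hΦinv : ∀ u : V, ∀ v ∈ K_V, ∀ w ∈ V₀, Φ u (v + w) = Φ u v)
    -- H(Ψ)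
    (Ψ : V → ℝ) (hΨ_lip : LocallyLipschitz Ψ) (α_Ψ : ℝ) (hαΨ : 0 ≤ α_Ψ)
    (hΨ : ∀ v₁ v₂ : V,
      clarkeDeriv Ψ v₁ (v₂ - v₁) + clarkeDeriv Ψ v₂ (v₁ - v₂) ≤ α_Ψ * ‖v₁ - v₂‖ ^ 2)
    (hΨ₀ : ∀ v ∈ K_V, ∀ w ∈ V₀, clarkeDeriv Ψ v w = 0)
    -- H(f) and smallness
    (f : V →L[ℝ] ℝ) (hsmall : α_Φ + α_Ψ < m_A)
    -- two solutions
    (u₁ u₂ : V) (hu₁ : u₁ ∈ K_V) (hu₂ : u₂ ∈ K_V)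
    (p₁ p₂ : Q) (hp₁ : p₁ ∈ K_Q) (hp₂ : p₂ ∈ K_Q)
    (hsol₁ : ∀ v ∈ K_V,
      A u₁ (v - u₁) + b (v - u₁) p₁ + Φ u₁ v - Φ u₁ u₁ + clarkeDeriv Ψ u₁ (v - u₁)
        ≥ f (v - u₁))
    (hconstr₁ : ∀ q ∈ K_Q, b u₁ (q - p₁) ≤ 0)
    (hsol₂ : ∀ v ∈ K_V,
      A u₂ (v - u₂) + b (v - u₂) p₂ + Φ u₂ v - Φ u₂ u₂ + clarkeDeriv Ψ u₂ (v - u₂)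
        ≥ f (v - u₂))
    (hconstr₂ : ∀ q ∈ K_Q, b u₂ (q - p₂) ≤ 0) :
    u₁ = u₂ ∧ p₁ = p₂ :=
  mixed_vhvi_uniqueness_general K_V hKVc hKVconv V₀ hV₀ K_Q A m_A hA_mono b α_b hαb hinfsup Φ α_Φ hΦ
    hΦinv Ψ α_Ψ hΨ hΨ₀ f hsmall u₁ u₂ hu₁ hu₂ p₁ p₂ hp₁ hp₂ hsol₁ hconstr₁ hsol₂ hconstr₂
end

section
/- Keep the hypotheses H(K_V), H(K_Q), H(A), H(b), H(Φ)₂, H(Ψ) with α_Φ + α_Ψ < m_A. If (u₁,p₁) and (u₂,p₂) solve the mixed variational-hemivariational inequality with right-hand sides f₁ and f₂ respectively, then ‖u₁ − u₂‖_V ≤ (1/(m_A − α_Φ − α_Ψ))‖f₁ − f₂‖_{V*} and α_b‖p₁ − p₂‖_Q ≤ ‖f₁ − f₂‖_{V*} + M_A‖u₁ − u₂‖_V; hence ‖u₁−u₂‖_V + ‖p₁−p₂‖_Q ≤ c‖f₁−f₂‖_{V*} for a constant c depending only on m_A, M_A, α_Φ, α_Ψ, α_b. -/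
/-!
Test the inequality for `u₁` with `v = u₂`, the one for `u₂` with `v = u₁`, and add: strong
monotonicity of `A` beats the `α_Φ` and `α_Ψ` terms, while the constraint inequalities tested
with `q = p₂` and `q = p₁` give `b (u₁ - u₂) (p₁ - p₂) ≥ 0`, whence the bound on `u₁ - u₂`.
On `V₀` the inequality is an equation: test with `v = (1 - s) • u + w`, use convexity of `Φ u`,
invariance under `V₀` and sublinearity of the Clarke derivative, and let `s ↓ 0`. Subtracting the
two equations expresses `b w (p₁ - p₂)` through `f₁ - f₂` and `A u₁ - A u₂`, and the inf-sup
condition turns this into the bound on `p₁ - p₂`.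
-/

open Filter

open Topology

lemma le_of_mul_sq_le_mul {c x y : ℝ} (hx : 0 ≤ x) (hy : 0 ≤ y) (h : c * x ^ 2 ≤ y * x) :
    c * x ≤ y := by
  rcases hx.eq_or_lt with rfl | hx
  · simpa using hy
  · exact le_of_mul_le_mul_right (by linarith) hx

lemma exists_pos_add_le_mul {x y z k α M : ℝ} (hk : 0 ≤ k) (hα : 0 < α) (hM : 0 ≤ M)
    (hx : x ≤ k * z) (hy : α * y ≤ z + M * x) : ∃ c, 0 < c ∧ x + y ≤ c * z := by
  refine ⟨k + (1 + M * k) / α, by positivity, ?_⟩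
  have hy' : y ≤ (1 + M * k) / α * z := by
    rw [div_mul_eq_mul_div, le_div_iff₀' hα]
    nlinarith [mul_le_mul_of_nonneg_left hx hM]
  linarith

section ClarkeDerivative

variable {V : Type*} [NormedAddCommGroup V] [NormedSpace ℝ V] {Ψ : V → ℝ}

noncomputable def clarkeQuotient (Ψ : V → ℝ) (v : V) (p : V × ℝ) : ℝ :=
  (Ψ (p.1 + p.2 • v) - Ψ p.1) / p.2

lemma clarkeDeriv_eq_limsup (Ψ : V → ℝ) (u v : V) :
    clarkeDeriv Ψ u v = limsup (clarkeQuotient Ψ v) (𝓝 u ×ˢ 𝓝[>] 0) :=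
  rfl

lemma tendsto_add_smul_nhds_prod_nhdsGT (u v : V) :
    Tendsto (fun p : V × ℝ => p.1 + p.2 • v) (𝓝 u ×ˢ 𝓝[>] (0 : ℝ)) (𝓝 u) := by
  have hsnd : Tendsto (fun p : V × ℝ => p.2) (𝓝 u ×ˢ 𝓝[>] 0) (𝓝 0) :=
    tendsto_snd.mono_right nhdsWithin_le_nhds
  simpa using tendsto_fst.add (hsnd.smul_const v)

lemma LocallyLipschitz.isBoundedUnder_abs_clarkeQuotient (hΨ : LocallyLipschitz Ψ) (u v : V) :
    IsBoundedUnder (· ≤ ·) (𝓝 u ×ˢ 𝓝[>] 0) fun p => |clarkeQuotient Ψ v p| := by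
  obtain ⟨K, t, ht, hK⟩ := hΨ u
  refine isBoundedUnder_of_eventually_le (a := K * ‖v‖) ?_
  filter_upwards [tendsto_fst.eventually_mem ht,
    (tendsto_add_smul_nhds_prod_nhdsGT u v).eventually_mem ht,
    tendsto_snd.eventually_mem self_mem_nhdsWithin] with p hp hpv (hpos : 0 < p.2)
  have hlip := hK.dist_le_mul _ hpv _ hp
  rw [Real.dist_eq, dist_eq_norm, add_sub_cancel_left, norm_smul, Real.norm_of_nonneg hpos.le]
    at hlip
  rw [clarkeQuotient, abs_div, abs_of_pos hpos, div_le_iff₀ hpos]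
  linarith

lemma LocallyLipschitz.clarkeDeriv_smul (hΨ : LocallyLipschitz Ψ) (u v : V) {c : ℝ}
    (hc : 0 < c) : clarkeDeriv Ψ u (c • v) = c * clarkeDeriv Ψ u v := by
  obtain ⟨hle, hge⟩ := isBoundedUnder_le_abs.1 (hΨ.isBoundedUnder_abs_clarkeQuotient u v)
  have hmap : map (Prod.map id (c * ·)) (𝓝 u ×ˢ 𝓝[>] 0) = 𝓝 u ×ˢ 𝓝[>] (0 : ℝ) := by
    rw [← prod_map_map_eq', map_id, (congrArg (map (c * ·)) (comap_mulLeft_nhdsGT_zero hc)).symm,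
      map_comap_of_surjective (mul_left_surjective₀ hc.ne')]
  have hquot :
      clarkeQuotient Ψ (c • v) = ((c * ·) ∘ clarkeQuotient Ψ v) ∘ Prod.map id (c * ·) := by
    funext p
    simp only [clarkeQuotient, Function.comp, Prod.map, id, smul_smul, mul_comm p.2 c]
    rw [mul_div_assoc', mul_div_mul_left _ _ hc.ne']
  rw [clarkeDeriv_eq_limsup, clarkeDeriv_eq_limsup, hquot, limsup_comp, hmap]
  exact ((monotone_mul_left_of_nonneg hc.le).map_limsup_of_continuousAt _
    (continuous_const_mul c).continuousAt hle hge.isCoboundedUnder_le).symm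

lemma LocallyLipschitz.clarkeDeriv_add_le (hΨ : LocallyLipschitz Ψ) (u v w : V) :
    clarkeDeriv Ψ u (v + w) ≤ clarkeDeriv Ψ u v + clarkeDeriv Ψ u w := by
  set F := 𝓝 u ×ˢ 𝓝[>] (0 : ℝ)
  set shift : V × ℝ → V × ℝ := fun p => (p.1 + p.2 • w, p.2)
  have hshift : Tendsto shift F F :=
    (tendsto_add_smul_nhds_prod_nhdsGT u w).prodMk tendsto_snd
  obtain ⟨hv_le, hv_ge⟩ := isBoundedUnder_le_abs.1 (hΨ.isBoundedUnder_abs_clarkeQuotient u v)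
  obtain ⟨hw_le, hw_ge⟩ := isBoundedUnder_le_abs.1 (hΨ.isBoundedUnder_abs_clarkeQuotient u w)
  have hquot : clarkeQuotient Ψ (v + w) = clarkeQuotient Ψ v ∘ shift + clarkeQuotient Ψ w := by
    funext p
    simp only [clarkeQuotient, Pi.add_apply, Function.comp, shift, smul_add, ← add_div,
      add_assoc, add_comm (p.2 • v), sub_add_sub_cancel]
  rw [clarkeDeriv_eq_limsup, clarkeDeriv_eq_limsup, clarkeDeriv_eq_limsup, hquot]
  calc limsup (clarkeQuotient Ψ v ∘ shift + clarkeQuotient Ψ w) F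
      ≤ limsup (clarkeQuotient Ψ v ∘ shift) F + limsup (clarkeQuotient Ψ w) F :=
        limsup_add_le (hshift.isBoundedUnder_comp hv_ge) (hshift.isBoundedUnder_comp hv_le)
          hw_ge.isCoboundedUnder_le hw_le
    _ ≤ limsup (clarkeQuotient Ψ v) F + limsup (clarkeQuotient Ψ w) F := by
        gcongr
        exact hshift.limsup_comp_le_limsup
          (hshift.isBoundedUnder_comp hv_ge).isCoboundedUnder_le hv_le

lemma apply_nonneg_of_forall_variational_ineq {K : Set V} (hK : Convex ℝ K)
    {V₀ : Submodule ℝ V} (hV₀ : (V₀ : Set V) ⊆ K) {φ : V → ℝ} (hφ : ConvexOn ℝ Set.univ φ)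
    (hφ_inv : ∀ v ∈ K, ∀ w ∈ V₀, φ (v + w) = φ v) (hΨ : LocallyLipschitz Ψ) {u : V}
    (hu : u ∈ K) (hΨ₀ : ∀ w ∈ V₀, clarkeDeriv Ψ u w = 0) {ℓ : V →ₗ[ℝ] ℝ}
    (hℓ : ∀ v ∈ K, 0 ≤ ℓ (v - u) + φ v - φ u + clarkeDeriv Ψ u (v - u)) {w : V} (hw : w ∈ V₀) :
    0 ≤ ℓ w := by
  set Y := φ 0 - φ u - ℓ u + clarkeDeriv Ψ u (-u)
  have hφ_zero : φ w = φ 0 := by simpa using hφ_inv 0 (hV₀ V₀.zero_mem) w hw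
  have hstep : ∀ s ∈ Set.Ioc (0 : ℝ) 1, 0 ≤ ℓ w + s * Y := by
    rintro s ⟨hs, hs1⟩
    have hv : (1 - s) • u + s • (s⁻¹ • w) ∈ K :=
      hK hu (hV₀ (V₀.smul_mem _ hw)) (by linarith) hs.le (by ring)
    rw [smul_inv_smul₀ hs.ne'] at hv
    have hφv : φ ((1 - s) • u + w) ≤ (1 - s) * φ u + s * φ 0 := by
      have : φ ((1 - s) • (u + w) + s • w) ≤ (1 - s) • φ (u + w) + s • φ w :=
        hφ.2 trivial trivial (by linarith) hs.le (by ring)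
      rwa [hφ_inv u hu w hw, hφ_zero, show (1 - s) • (u + w) + s • w = (1 - s) • u + w by
        module] at this
    have hΨv : clarkeDeriv Ψ u (w + s • -u) ≤ s * clarkeDeriv Ψ u (-u) :=
      calc clarkeDeriv Ψ u (w + s • -u)
          ≤ clarkeDeriv Ψ u w + clarkeDeriv Ψ u (s • -u) := hΨ.clarkeDeriv_add_le u w _
        _ = s * clarkeDeriv Ψ u (-u) := by
          rw [hΨ₀ w hw, hΨ.clarkeDeriv_smul u (-u) hs, zero_add]
    have := hℓ _ hv
    rw [show (1 - s) • u + w - u = w + s • -u by module, map_add, map_smul, map_neg,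
      smul_eq_mul] at this
    linarith
  have hlim : Tendsto (fun s => ℓ w + s * Y) (𝓝[>] 0) (𝓝 (ℓ w)) :=
    (Continuous.tendsto' (by fun_prop) 0 (ℓ w) (by simp)).mono_left nhdsWithin_le_nhds
  exact ge_of_tendsto hlim (eventually_of_mem (Ioc_mem_nhdsGT one_pos) hstep)

lemma apply_eq_zero_of_forall_variational_ineq {K : Set V} (hK : Convex ℝ K)
    {V₀ : Submodule ℝ V} (hV₀ : (V₀ : Set V) ⊆ K) {φ : V → ℝ} (hφ : ConvexOn ℝ Set.univ φ)
    (hφ_inv : ∀ v ∈ K, ∀ w ∈ V₀, φ (v + w) = φ v) (hΨ : LocallyLipschitz Ψ) {u : V}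
    (hu : u ∈ K) (hΨ₀ : ∀ w ∈ V₀, clarkeDeriv Ψ u w = 0) {ℓ : V →ₗ[ℝ] ℝ}
    (hℓ : ∀ v ∈ K, 0 ≤ ℓ (v - u) + φ v - φ u + clarkeDeriv Ψ u (v - u)) {w : V} (hw : w ∈ V₀) :
    ℓ w = 0 := by
  have hpos := apply_nonneg_of_forall_variational_ineq hK hV₀ hφ hφ_inv hΨ hu hΨ₀ hℓ hw
  have hneg := apply_nonneg_of_forall_variational_ineq hK hV₀ hφ hφ_inv hΨ hu hΨ₀ hℓ
    (V₀.neg_mem hw)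
  rw [map_neg] at hneg
  linarith

end ClarkeDerivative

section MixedProblem

variable {V Q : Type*} [NormedAddCommGroup V] [NormedSpace ℝ V] [NormedAddCommGroup Q]
  [Module ℝ Q] {K_V : Set V} {K_Q : Set Q} {A : V → V →L[ℝ] ℝ} {b : V →ₗ[ℝ] Q →ₗ[ℝ] ℝ}
  {Φ : V → V → ℝ} {Ψ : V → ℝ} {f f₁ f₂ : V →L[ℝ] ℝ} {u u₁ u₂ : V} {p p₁ p₂ : Q}

lemma ContinuousLinearMap.apply_le_opNorm_mul (ℓ : V →L[ℝ] ℝ) (x : V) : ℓ x ≤ ‖ℓ‖ * ‖x‖ :=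
  (le_abs_self _).trans (ℓ.le_opNorm x)

structure IsMixedVHVISolution (K_V : Set V) (K_Q : Set Q) (A : V → V →L[ℝ] ℝ)
    (b : V →ₗ[ℝ] Q →ₗ[ℝ] ℝ) (Φ : V → V → ℝ) (Ψ : V → ℝ) (f : V →L[ℝ] ℝ) (u : V) (p : Q) :
    Prop where
  mem_K_V : u ∈ K_V
  mem_K_Q : p ∈ K_Q
  variational : ∀ v ∈ K_V,
    A u (v - u) + b (v - u) p + Φ u v - Φ u u + clarkeDeriv Ψ u (v - u) ≥ f (v - u)
  constraint : ∀ q ∈ K_Q, b u (q - p) ≤ 0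

namespace IsMixedVHVISolution

lemma apply_add_eq (h : IsMixedVHVISolution K_V K_Q A b Φ Ψ f u p) (hK : Convex ℝ K_V)
    {V₀ : Submodule ℝ V} (hV₀ : (V₀ : Set V) ⊆ K_V) (hΦ_conv : ConvexOn ℝ Set.univ (Φ u))
    (hΦ_inv : ∀ v ∈ K_V, ∀ w ∈ V₀, Φ u (v + w) = Φ u v) (hΨ : LocallyLipschitz Ψ)
    (hΨ₀ : ∀ w ∈ V₀, clarkeDeriv Ψ u w = 0) : ∀ w ∈ V₀, A u w + b w p = f w := by
  intro w hw
  have := apply_eq_zero_of_forall_variational_ineq (ℓ := (A u).toLinearMap + b.flip p - f)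
    hK hV₀ hΦ_conv hΦ_inv hΨ h.mem_K_V hΨ₀ (fun v hv => by
      have := h.variational v hv
      simp only [LinearMap.sub_apply, LinearMap.add_apply, LinearMap.flip_apply,
        ContinuousLinearMap.coe_coe]
      linarith) hw
  simp only [LinearMap.sub_apply, LinearMap.add_apply, LinearMap.flip_apply,
    ContinuousLinearMap.coe_coe] at this
  linarith

lemma apply_sub_nonneg (h₁ : IsMixedVHVISolution K_V K_Q A b Φ Ψ f₁ u₁ p₁)
    (h₂ : IsMixedVHVISolution K_V K_Q A b Φ Ψ f₂ u₂ p₂) : 0 ≤ b (u₁ - u₂) (p₁ - p₂) := by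
  have c₁ := h₁.constraint p₂ h₂.mem_K_Q
  have c₂ := h₂.constraint p₁ h₁.mem_K_Q
  simp only [map_sub, LinearMap.sub_apply] at c₁ c₂ ⊢
  linarith

lemma apply_sub_le {α_Φ α_Ψ : ℝ} (h₁ : IsMixedVHVISolution K_V K_Q A b Φ Ψ f₁ u₁ p₁)
    (h₂ : IsMixedVHVISolution K_V K_Q A b Φ Ψ f₂ u₂ p₂)
    (hΦ : ∀ u₁ u₂ v₁ v₂ : V,
      Φ u₁ v₂ - Φ u₁ v₁ + Φ u₂ v₁ - Φ u₂ v₂ ≤ α_Φ * ‖u₁ - u₂‖ * ‖v₁ - v₂‖)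
    (hΨ : ∀ v₁ v₂ : V,
      clarkeDeriv Ψ v₁ (v₂ - v₁) + clarkeDeriv Ψ v₂ (v₁ - v₂) ≤ α_Ψ * ‖v₁ - v₂‖ ^ 2) :
    (A u₁ - A u₂) (u₁ - u₂) ≤ (f₁ - f₂) (u₁ - u₂) + (α_Φ + α_Ψ) * ‖u₁ - u₂‖ ^ 2 := by
  have s₁ := h₁.variational u₂ h₂.mem_K_V
  have s₂ := h₂.variational u₁ h₁.mem_K_V
  have hb := h₁.apply_sub_nonneg h₂
  have hΦ₁₂ := hΦ u₁ u₂ u₁ u₂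
  have hΨ₁₂ := hΨ u₁ u₂
  simp only [map_sub, sub_apply, LinearMap.sub_apply] at s₁ s₂ hb ⊢
  linarith

lemma norm_sub_le {m_A α_Φ α_Ψ : ℝ} (h₁ : IsMixedVHVISolution K_V K_Q A b Φ Ψ f₁ u₁ p₁)
    (h₂ : IsMixedVHVISolution K_V K_Q A b Φ Ψ f₂ u₂ p₂)
    (hA_mono : ∀ v₁ v₂ : V, m_A * ‖v₁ - v₂‖ ^ 2 ≤ (A v₁ - A v₂) (v₁ - v₂))
    (hΦ : ∀ u₁ u₂ v₁ v₂ : V,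
      Φ u₁ v₂ - Φ u₁ v₁ + Φ u₂ v₁ - Φ u₂ v₂ ≤ α_Φ * ‖u₁ - u₂‖ * ‖v₁ - v₂‖)
    (hΨ : ∀ v₁ v₂ : V,
      clarkeDeriv Ψ v₁ (v₂ - v₁) + clarkeDeriv Ψ v₂ (v₁ - v₂) ≤ α_Ψ * ‖v₁ - v₂‖ ^ 2)
    (hgap : 0 < m_A - α_Φ - α_Ψ) :
    ‖u₁ - u₂‖ ≤ 1 / (m_A - α_Φ - α_Ψ) * ‖f₁ - f₂‖ := by
  rw [one_div_mul_eq_div, le_div_iff₀' hgap]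
  refine le_of_mul_sq_le_mul (norm_nonneg _) (norm_nonneg _) ?_
  have := h₁.apply_sub_le h₂ hΦ hΨ
  have := hA_mono u₁ u₂
  have := (f₁ - f₂).apply_le_opNorm_mul (u₁ - u₂)
  linarith

end IsMixedVHVISolution

lemma mul_norm_le_of_forall_apply_le {V₀ : Submodule ℝ V} {q : Q} {α C : ℝ}
    (hinfsup : α * ‖q‖ ≤ ⨆ w : {w : V // w ∈ V₀ ∧ w ≠ 0}, b w q / ‖(w : V)‖) (hC : 0 ≤ C)
    (hb : ∀ w ∈ V₀, b w q ≤ C * ‖w‖) : α * ‖q‖ ≤ C :=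
  hinfsup.trans <| Real.iSup_le (fun w =>
    div_le_of_le_mul₀ (norm_nonneg _) hC (hb w w.2.1)) hC

lemma mul_norm_sub_le_of_apply_add_eq {V₀ : Submodule ℝ V} {α_b M_A : ℝ}
    (hinfsup : ∀ q : Q, α_b * ‖q‖ ≤ ⨆ w : {w : V // w ∈ V₀ ∧ w ≠ 0}, b w q / ‖(w : V)‖)
    (hM_A : 0 ≤ M_A) (hA_lip : ∀ v₁ v₂ : V, ‖A v₁ - A v₂‖ ≤ M_A * ‖v₁ - v₂‖)
    (h₁ : ∀ w ∈ V₀, A u₁ w + b w p₁ = f₁ w) (h₂ : ∀ w ∈ V₀, A u₂ w + b w p₂ = f₂ w) :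
    α_b * ‖p₁ - p₂‖ ≤ ‖f₁ - f₂‖ + M_A * ‖u₁ - u₂‖ := by
  refine mul_norm_le_of_forall_apply_le (hinfsup _) (by positivity) fun w hw => ?_
  have hbw : b w (p₁ - p₂) = (f₁ - f₂) w + (A u₂ - A u₁) w := by
    simp only [map_sub, sub_apply, ← h₁ w hw, ← h₂ w hw]
    ring
  have hA : ‖A u₂ - A u₁‖ * ‖w‖ ≤ M_A * ‖u₁ - u₂‖ * ‖w‖ := by
    rw [norm_sub_rev u₁]
    exact mul_le_mul_of_nonneg_right (hA_lip u₂ u₁) (norm_nonneg w)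
  rw [hbw]
  linarith [(f₁ - f₂).apply_le_opNorm_mul w, (A u₂ - A u₁).apply_le_opNorm_mul w]

end MixedProblem

theorem mixed_vhvi_lipschitz_dependence_general
    {V Q : Type*} [NormedAddCommGroup V] [InnerProductSpace ℝ V]
    [NormedAddCommGroup Q] [InnerProductSpace ℝ Q]
    -- H(K_V)
    (K_V : Set V) (hKVconv : Convex ℝ K_V)
    (V₀ : Submodule ℝ V) (hV₀ : (V₀ : Set V) ⊆ K_V)
    -- H(K_Q)
    (K_Q : Set Q)
    -- H(A)
    (A : V → V →L[ℝ] ℝ) (m_A M_A : ℝ) (hMA : 0 < M_A)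
    (hA_lip : ∀ v₁ v₂ : V, ‖A v₁ - A v₂‖ ≤ M_A * ‖v₁ - v₂‖)
    (hA_mono : ∀ v₁ v₂ : V, m_A * ‖v₁ - v₂‖ ^ 2 ≤ (A v₁ - A v₂) (v₁ - v₂))
    -- H(b)
    (b : V →ₗ[ℝ] Q →ₗ[ℝ] ℝ)
    (α_b : ℝ) (hαb : 0 < α_b)
    (hinfsup : ∀ q : Q, α_b * ‖q‖ ≤ ⨆ w : {w : V // w ∈ V₀ ∧ w ≠ 0}, b w q / ‖(w : V)‖)
    -- H(Φ)₂
    (Φ : V → V → ℝ) (α_Φ : ℝ)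
    (hΦconv : ∀ u : V, ConvexOn ℝ Set.univ (Φ u))
    (hΦ : ∀ u₁ u₂ v₁ v₂ : V,
      Φ u₁ v₂ - Φ u₁ v₁ + Φ u₂ v₁ - Φ u₂ v₂ ≤ α_Φ * ‖u₁ - u₂‖ * ‖v₁ - v₂‖)
    (hΦinv : ∀ u : V, ∀ v ∈ K_V, ∀ w ∈ V₀, Φ u (v + w) = Φ u v)
    -- H(Ψ)
    (Ψ : V → ℝ) (hΨ_lip : LocallyLipschitz Ψ) (α_Ψ : ℝ)
    (hΨ : ∀ v₁ v₂ : V,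
      clarkeDeriv Ψ v₁ (v₂ - v₁) + clarkeDeriv Ψ v₂ (v₁ - v₂) ≤ α_Ψ * ‖v₁ - v₂‖ ^ 2)
    (hΨ₀ : ∀ v ∈ K_V, ∀ w ∈ V₀, clarkeDeriv Ψ v w = 0)
    -- H(f) and smallness
    (f₁ f₂ : V →L[ℝ] ℝ) (hsmall : α_Φ + α_Ψ < m_A)
    -- two solutions
    (u₁ u₂ : V) (hu₁ : u₁ ∈ K_V) (hu₂ : u₂ ∈ K_V)
    (p₁ p₂ : Q) (hp₁ : p₁ ∈ K_Q) (hp₂ : p₂ ∈ K_Q)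
    (hsol₁ : ∀ v ∈ K_V,
      A u₁ (v - u₁) + b (v - u₁) p₁ + Φ u₁ v - Φ u₁ u₁ + clarkeDeriv Ψ u₁ (v - u₁)
        ≥ f₁ (v - u₁))
    (hconstr₁ : ∀ q ∈ K_Q, b u₁ (q - p₁) ≤ 0)
    (hsol₂ : ∀ v ∈ K_V,
      A u₂ (v - u₂) + b (v - u₂) p₂ + Φ u₂ v - Φ u₂ u₂ + clarkeDeriv Ψ u₂ (v - u₂)
        ≥ f₂ (v - u₂))
    (hconstr₂ : ∀ q ∈ K_Q, b u₂ (q - p₂) ≤ 0) :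
    ‖u₁ - u₂‖ ≤ 1 / (m_A - α_Φ - α_Ψ) * ‖f₁ - f₂‖ ∧
      α_b * ‖p₁ - p₂‖ ≤ ‖f₁ - f₂‖ + M_A * ‖u₁ - u₂‖ ∧
      ∃ c : ℝ, 0 < c ∧ ‖u₁ - u₂‖ + ‖p₁ - p₂‖ ≤ c * ‖f₁ - f₂‖ := by
  have hgap : 0 < m_A - α_Φ - α_Ψ := by linarith
  have h₁ : IsMixedVHVISolution K_V K_Q A b Φ Ψ f₁ u₁ p₁ := ⟨hu₁, hp₁, hsol₁, hconstr₁⟩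
  have h₂ : IsMixedVHVISolution K_V K_Q A b Φ Ψ f₂ u₂ p₂ := ⟨hu₂, hp₂, hsol₂, hconstr₂⟩
  have hu := h₁.norm_sub_le h₂ hA_mono hΦ hΨ hgap
  have hp := mul_norm_sub_le_of_apply_add_eq hinfsup hMA.le hA_lip
    (h₁.apply_add_eq hKVconv hV₀ (hΦconv u₁) (hΦinv u₁) hΨ_lip (hΨ₀ u₁ hu₁))
    (h₂.apply_add_eq hKVconv hV₀ (hΦconv u₂) (hΦinv u₂) hΨ_lip (hΨ₀ u₂ hu₂))
  exact ⟨hu, hp, exists_pos_add_le_mul (one_div_pos.2 hgap).le hαb hMA.le hu hp⟩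

/-- Lipschitz continuous dependence of the solution on the right-hand side: if `(u₁,p₁)`
and `(u₂,p₂)` solve the mixed variational-hemivariational inequality with right-hand sides
`f₁`, `f₂` respectively, then `‖u₁−u₂‖ ≤ (1/(m_A−α_Φ−α_Ψ))‖f₁−f₂‖`,
`α_b‖p₁−p₂‖ ≤ ‖f₁−f₂‖ + M_A‖u₁−u₂‖`, and `‖u₁−u₂‖ + ‖p₁−p₂‖ ≤ c‖f₁−f₂‖` for a constant
`c > 0` depending only on `m_A, M_A, α_Φ, α_Ψ, α_b`. -/
theorem mixed_vhvi_lipschitz_dependence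
    {V Q : Type*} [NormedAddCommGroup V] [InnerProductSpace ℝ V] [CompleteSpace V]
    [NormedAddCommGroup Q] [InnerProductSpace ℝ Q] [CompleteSpace Q]
    -- H(K_V)
    (K_V : Set V) (hKV : K_V.Nonempty) (hKVc : IsClosed K_V) (hKVconv : Convex ℝ K_V)
    (V₀ : Submodule ℝ V) (hV₀ : (V₀ : Set V) ⊆ K_V)
    -- H(K_Q)
    (K_Q : Set Q) (hKQ : K_Q.Nonempty) (hKQc : IsClosed K_Q) (hKQconv : Convex ℝ K_Q)
    -- H(A)
    (A : V → V →L[ℝ] ℝ) (m_A M_A : ℝ) (hmA : 0 < m_A) (hMA : 0 < M_A)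
    (hA_lip : ∀ v₁ v₂ : V, ‖A v₁ - A v₂‖ ≤ M_A * ‖v₁ - v₂‖)
    (hA_mono : ∀ v₁ v₂ : V, m_A * ‖v₁ - v₂‖ ^ 2 ≤ (A v₁ - A v₂) (v₁ - v₂))
    -- H(b)
    (b : V →ₗ[ℝ] Q →ₗ[ℝ] ℝ) (M_b : ℝ) (hMb : 0 < M_b)
    (hb_bd : ∀ (v : V) (q : Q), |b v q| ≤ M_b * ‖v‖ * ‖q‖)
    (α_b : ℝ) (hαb : 0 < α_b)
    (hinfsup : ∀ q : Q, α_b * ‖q‖ ≤ ⨆ w : {w : V // w ∈ V₀ ∧ w ≠ 0}, b w q / ‖(w : V)‖)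
    -- H(Φ)₂
    (Φ : V → V → ℝ) (α_Φ : ℝ) (hαΦ : 0 ≤ α_Φ)
    (hΦconv : ∀ u : V, ConvexOn ℝ Set.univ (Φ u))
    (hΦcont : ∀ u : V, Continuous (Φ u))
    (hΦ : ∀ u₁ u₂ v₁ v₂ : V,
      Φ u₁ v₂ - Φ u₁ v₁ + Φ u₂ v₁ - Φ u₂ v₂ ≤ α_Φ * ‖u₁ - u₂‖ * ‖v₁ - v₂‖)
    (hΦinv : ∀ u : V, ∀ v ∈ K_V, ∀ w ∈ V₀, Φ u (v + w) = Φ u v)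
    -- H(Ψ)
    (Ψ : V → ℝ) (hΨ_lip : LocallyLipschitz Ψ) (α_Ψ : ℝ) (hαΨ : 0 ≤ α_Ψ)
    (hΨ : ∀ v₁ v₂ : V,
      clarkeDeriv Ψ v₁ (v₂ - v₁) + clarkeDeriv Ψ v₂ (v₁ - v₂) ≤ α_Ψ * ‖v₁ - v₂‖ ^ 2)
    (hΨ₀ : ∀ v ∈ K_V, ∀ w ∈ V₀, clarkeDeriv Ψ v w = 0)
    -- H(f) and smallness
    (f₁ f₂ : V →L[ℝ] ℝ) (hsmall : α_Φ + α_Ψ < m_A)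
    -- two solutions
    (u₁ u₂ : V) (hu₁ : u₁ ∈ K_V) (hu₂ : u₂ ∈ K_V)
    (p₁ p₂ : Q) (hp₁ : p₁ ∈ K_Q) (hp₂ : p₂ ∈ K_Q)
    (hsol₁ : ∀ v ∈ K_V,
      A u₁ (v - u₁) + b (v - u₁) p₁ + Φ u₁ v - Φ u₁ u₁ + clarkeDeriv Ψ u₁ (v - u₁)
        ≥ f₁ (v - u₁))
    (hconstr₁ : ∀ q ∈ K_Q, b u₁ (q - p₁) ≤ 0)
    (hsol₂ : ∀ v ∈ K_V,
      A u₂ (v - u₂) + b (v - u₂) p₂ + Φ u₂ v - Φ u₂ u₂ + clarkeDeriv Ψ u₂ (v - u₂)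
        ≥ f₂ (v - u₂))
    (hconstr₂ : ∀ q ∈ K_Q, b u₂ (q - p₂) ≤ 0) :
    ‖u₁ - u₂‖ ≤ 1 / (m_A - α_Φ - α_Ψ) * ‖f₁ - f₂‖ ∧
      α_b * ‖p₁ - p₂‖ ≤ ‖f₁ - f₂‖ + M_A * ‖u₁ - u₂‖ ∧
      ∃ c : ℝ, 0 < c ∧ ‖u₁ - u₂‖ + ‖p₁ - p₂‖ ≤ c * ‖f₁ - f₂‖ :=
  mixed_vhvi_lipschitz_dependence_general K_V hKVconv V₀ hV₀ K_Q A m_A M_A hMA hA_lip hA_mono b α_b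
    hαb hinfsup Φ α_Φ hΦconv hΦ hΦinv Ψ hΨ_lip α_Ψ hΨ hΨ₀ f₁ f₂ hsmall u₁ u₂ hu₁ hu₂ p₁ p₂ hp₁ hp₂
    hsol₁ hconstr₁ hsol₂ hconstr₂
end
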